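/- For every n ≥ 2 and every odd positive integer ℓ, the quotient B_n[ℓ]/B_n[4ℓ] is isomorphic to B_n/B_n[4]. -/

import Mathlib

open Matrix

/-- The braid relations on `m` generators `σ_1, …, σ_m` (0-indexed by `Fin m`). -/
def braidRels (m : ℕ) : Set (FreeGroup (Fin m)) :=
  {r | (∃ i j : Fin m, (i : ℕ) + 1 = (j : ℕ) ∧
          r = FreeGroup.of i * FreeGroup.of j * FreeGroup.of i *
              (FreeGroup.of j * FreeGroup.of i * FreeGroup.of j)⁻¹) ∨
       (∃ i j : Fin m, (i : ℕ) + 2 ≤ (j : ℕ) ∧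
          r = FreeGroup.of i * FreeGroup.of j * (FreeGroup.of j * FreeGroup.of i)⁻¹)}

/-- The braid group on `n` strands, presented on generators `σ_1, …, σ_{n-1}`. -/
def BraidGroup (n : ℕ) : Type := PresentedGroup (braidRels (n - 1))

instance (n : ℕ) : Group (BraidGroup n) :=
  inferInstanceAs (Group (PresentedGroup (braidRels (n - 1))))

/-- The generator `σ_{k+1}` (in 1-indexed notation) of the braid group. -/
def braidGen (n : ℕ) (k : Fin (n - 1)) : BraidGroup n := PresentedGroup.of k

/-- The matrix of the generator `σ_{k+1}` under the reduced integral Burau representation. -/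
def burauMatrix (n : ℕ) (k : Fin (n - 1)) : Matrix (Fin (n - 1)) (Fin (n - 1)) ℤ :=
  Matrix.of fun a b =>
    if a = b then 1
    else if (a : ℕ) + 1 = (k : ℕ) ∧ b = k then -1
    else if (a : ℕ) = (k : ℕ) + 1 ∧ b = k then 1
    else 0

/-- `ρ` is the reduced integral Burau representation iff it takes the prescribed
values on the generators. -/
def IsBurau (n : ℕ) (ρ : BraidGroup n →* GL (Fin (n - 1)) ℤ) : Prop :=
  ∀ k : Fin (n - 1),
    (ρ (braidGen n k) : Matrix (Fin (n - 1)) (Fin (n - 1)) ℤ) = burauMatrix n k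

/-- The level `ℓ` congruence subgroup `B_n[ℓ]`: the kernel of the composition of the
reduced integral Burau representation with entrywise reduction mod `ℓ`. -/
def congSubgroup (n : ℕ) (ρ : BraidGroup n →* GL (Fin (n - 1)) ℤ) (ℓ : ℕ) :
    Subgroup (BraidGroup n) :=
  ((Matrix.GeneralLinearGroup.map (Int.castRingHom (ZMod ℓ))).comp ρ).ker

instance (n : ℕ) (ρ : BraidGroup n →* GL (Fin (n - 1)) ℤ) (ℓ : ℕ) :
    (congSubgroup n ρ ℓ).Normal :=
  MonoidHom.normal_ker _

instance (n : ℕ) (ρ : BraidGroup n →* GL (Fin (n - 1)) ℤ) (ℓ : ℕ)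
    (K : Subgroup (BraidGroup n)) : ((congSubgroup n ρ ℓ).subgroupOf K).Normal :=
  Subgroup.Normal.subgroupOf (MonoidHom.normal_ker _) K

/-!
Let `H = B_n[ℓ]` and `N = B_n[4]`. Since `4` and `ℓ` are coprime, the Chinese remainder theorem,
applied entrywise to `ρ g - 1`, gives `H ⊓ N = B_n[4ℓ]`. Each `ρ(σ_k)` is `1 + E` with `E² = 0`,
so `ρ(σ_k^m) = 1 + m E` and `σ_k^m ∈ B_n[m]`; as `σ_k^ℓ ∈ H`, `σ_k^4 ∈ N` and `gcd(ℓ, 4) = 1`,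
every generator lies in `H ⊔ N`, hence `H ⊔ N = B_n`. The second isomorphism theorem now gives
`H / (H ⊓ N) ≅ HN / N = B_n / N`.
-/

theorem Subgroup.mem_of_pow_mem_of_coprime {G : Type*} [Group G] {K : Subgroup G} {g : G}
    {a b : ℕ} (hab : Nat.Coprime a b) (ha : g ^ a ∈ K) (hb : g ^ b ∈ K) : g ∈ K := by
  obtain ⟨u, v, huv⟩ := Nat.isCoprime_iff_coprime.mpr hab
  have hg : g = (g ^ a) ^ u * (g ^ b) ^ v := by
    rw [← zpow_natCast, ← zpow_natCast, ← _root_.zpow_mul, ← _root_.zpow_mul, ← _root_.zpow_add,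
      mul_comm _ u, mul_comm _ v, huv, zpow_one]
  rw [hg]
  exact mul_mem (zpow_mem ha u) (zpow_mem hb v)

noncomputable def QuotientGroup.quotientSubgroupOfEquivOfSupEqTop {G : Type*} [Group G]
    (H N : Subgroup G) [N.Normal] (h : H ⊔ N = ⊤) : H ⧸ N.subgroupOf H ≃* G ⧸ N :=
  (QuotientGroup.quotientInfEquivProdNormalQuotient H N).trans <|
    QuotientGroup.congr _ _ ((MulEquiv.subgroupCongr h).trans Subgroup.topEquiv) (by
      ext g
      simpa [Subgroup.mem_subgroupOf] using fun hg => Subgroup.mem_sup_right hg)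

theorem one_add_pow_of_mul_self_eq_zero {R : Type*} [Ring R] {N : R} (h : N * N = 0) (m : ℕ) :
    (1 + N) ^ m = 1 + m • N := by
  induction m with
  | zero => simp
  | succ m ih =>
    rw [pow_succ, ih, add_mul, one_mul, mul_add, mul_one, smul_mul_assoc, h, smul_zero, add_zero,
      succ_nsmul]
    abel

theorem burauMatrix_sub_one_mul_self (n : ℕ) (k : Fin (n - 1)) :
    (burauMatrix n k - 1) * (burauMatrix n k - 1) = 0 := by
  -- `burauMatrix n k - 1` is supported in column `k` and vanishes on row `k`.
  ext a b
  simp only [Matrix.mul_apply, Matrix.zero_apply]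
  refine Finset.sum_eq_zero fun c _ => ?_
  by_cases hc : c = k
  · have hrow : (burauMatrix n k - 1) c b = 0 := by
      subst hc
      simp only [burauMatrix, Matrix.sub_apply, Matrix.one_apply, Matrix.of_apply]
      split_ifs <;> simp_all
    rw [hrow, mul_zero]
  · have hcol : (burauMatrix n k - 1) a c = 0 := by
      simp only [burauMatrix, Matrix.sub_apply, Matrix.one_apply, Matrix.of_apply]
      split_ifs <;> simp_all
    rw [hcol, zero_mul]

theorem burauMatrix_pow (n : ℕ) (k : Fin (n - 1)) (m : ℕ) :
    burauMatrix n k ^ m = 1 + m • (burauMatrix n k - 1) := by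
  rw [← one_add_pow_of_mul_self_eq_zero (burauMatrix_sub_one_mul_self n k), add_sub_cancel]

section CongruenceSubgroup

variable (n : ℕ) (ρ : BraidGroup n →* GL (Fin (n - 1)) ℤ)

theorem mem_congSubgroup_iff (m : ℕ) (g : BraidGroup n) :
    g ∈ congSubgroup n ρ m ↔
      ∀ i j, (m : ℤ) ∣ ((ρ g : Matrix (Fin (n - 1)) (Fin (n - 1)) ℤ) - 1) i j := by
  simp [congSubgroup, Units.ext_iff, ← Matrix.ext_iff, Matrix.GeneralLinearGroup.map,
    ← ZMod.intCast_zmod_eq_zero_iff_dvd, sub_eq_zero, Matrix.one_apply, apply_ite]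

theorem congSubgroup_mul_eq_inf {a b : ℕ} (hab : Nat.Coprime a b) :
    congSubgroup n ρ (a * b) = congSubgroup n ρ a ⊓ congSubgroup n ρ b := by
  have hab' : IsCoprime (a : ℤ) b := Nat.isCoprime_iff_coprime.mpr hab
  ext g
  simp only [Subgroup.mem_inf, mem_congSubgroup_iff, Nat.cast_mul]
  exact ⟨fun h => ⟨fun i j => dvd_of_mul_right_dvd (h i j), fun i j => dvd_of_mul_left_dvd (h i j)⟩,
    fun h i j => hab'.mul_dvd (h.1 i j) (h.2 i j)⟩

variable {n ρ}

theorem braidGen_pow_mem_congSubgroup (hρ : IsBurau n ρ) (k : Fin (n - 1)) (m : ℕ) :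
    braidGen n k ^ m ∈ congSubgroup n ρ m := by
  rw [mem_congSubgroup_iff, map_pow, Units.val_pow_eq_pow_val, hρ k, burauMatrix_pow,
    add_sub_cancel_left]
  intro i j
  simp only [Matrix.smul_apply, nsmul_eq_mul]
  exact dvd_mul_right _ _

theorem congSubgroup_sup_eq_top (hρ : IsBurau n ρ) {a b : ℕ} (hab : Nat.Coprime a b) :
    congSubgroup n ρ a ⊔ congSubgroup n ρ b = ⊤ := by
  have hgen : Subgroup.closure (Set.range (braidGen n)) = ⊤ :=
    PresentedGroup.closure_range_of (braidRels (n - 1))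
  rw [eq_top_iff, ← hgen, Subgroup.closure_le]
  rintro _ ⟨k, rfl⟩
  exact Subgroup.mem_of_pow_mem_of_coprime hab
    (Subgroup.mem_sup_left (braidGen_pow_mem_congSubgroup hρ k a))
    (Subgroup.mem_sup_right (braidGen_pow_mem_congSubgroup hρ k b))

end CongruenceSubgroup

theorem congSubgroup_quotient_iso_general (n : ℕ) (ℓ : ℕ)
    (hodd : Odd ℓ)
    (ρ : BraidGroup n →* GL (Fin (n - 1)) ℤ) (hρ : IsBurau n ρ) :
    Nonempty
      ((↥(congSubgroup n ρ ℓ) ⧸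
          (congSubgroup n ρ (4 * ℓ)).subgroupOf (congSubgroup n ρ ℓ)) ≃*
        (BraidGroup n ⧸ congSubgroup n ρ 4)) := by
  have hcop : Nat.Coprime ℓ 4 := Nat.Coprime.pow_right 2 (Nat.coprime_two_right.mpr hodd)
  have hinf : (congSubgroup n ρ (4 * ℓ)).subgroupOf (congSubgroup n ρ ℓ) =
      (congSubgroup n ρ 4).subgroupOf (congSubgroup n ρ ℓ) := by
    rw [congSubgroup_mul_eq_inf n ρ hcop.symm, Subgroup.inf_subgroupOf_right]
  exact ⟨(QuotientGroup.quotientMulEquivOfEq hinf).trans <|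
    QuotientGroup.quotientSubgroupOfEquivOfSupEqTop _ _ (congSubgroup_sup_eq_top hρ hcop)⟩

/-- For every `n ≥ 2` and every odd positive integer `ℓ`, the quotient
`B_n[ℓ] / B_n[4ℓ]` is isomorphic to `B_n / B_n[4]`. -/
theorem congSubgroup_quotient_iso (n : ℕ) (hn : 2 ≤ n) (ℓ : ℕ) (hℓ : 0 < ℓ)
    (hodd : Odd ℓ)
    (ρ : BraidGroup n →* GL (Fin (n - 1)) ℤ) (hρ : IsBurau n ρ) :
    Nonempty
      ((↥(congSubgroup n ρ ℓ) ⧸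
          (congSubgroup n ρ (4 * ℓ)).subgroupOf (congSubgroup n ρ ℓ)) ≃*
        (BraidGroup n ⧸ congSubgroup n ρ 4)) :=
  congSubgroup_quotient_iso_general n ℓ hodd ρ hρ
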